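/- arXiv:math/9907099 — 2 statements merged into one kernel-verified Lean document; each statement's English description precedes it below -/
import Mathlib

section
/- For the general skew-symmetric element r = r(a,b,c) (with no constraints on the 15 parameters), the coboundary cocommutator δ_r is given by: δ_r(D) = -a1 D∧P - 2a2 D∧H - a3 P∧M - 2a4 H∧M - 3a5 P∧H + a6 P∧C + b1 D∧K + 2b2 D∧C + b3 K∧M + 2b4 C∧M + 3b5 K∧C - b6 K∧H; δ_r(P) = (a6-b1) K∧P - a2 H∧P - b1 D∧M - b2(C∧P + D∧K) - b4 K∧M + b5 C∧M + b6 H∧M + (c1-c2) P∧M + c3 K∧H; δ_r(K) = (a1-b6) P∧K + b2 C∧K + a1 D∧M + a2(H∧K + D∧P) + a4 P∧M - a5 H∧M - a6 C∧M - (c1+c2) K∧M + c3 P∧C; δ_r(H) = -(2a1+b6) P∧H - (a6+b1) D∧P - 2b1 K∧H - 2b2 C∧H - b3 P∧M + b4 D∧M - b5(D∧K + P∧C) + 2c1 H∧M - c3 D∧H; δ_r(C) = (2b1+a6) K∧C + (b6+a1) D∧K + 2a1 P∧C + 2a2 H∧C + a3 K∧M - a4 D∧M + a5(D∧P + K∧H)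 - 2c1 C∧M - c3 D∧C; δ_r(M) = 0. -/
open TensorProduct

noncomputable section

variable (L : Type) [LieRing L] [LieAlgebra ℝ L]

/-- The wedge X∧Y = X⊗Y - Y⊗X in S⊗S. -/
def wedge (X Y : L) : L ⊗[ℝ] L := X ⊗ₜ[ℝ] Y - Y ⊗ₜ[ℝ] X

/-- The adjoint action of X on S⊗S: X·r = (ad_X⊗id + id⊗ad_X)(r). -/
def act (X : L) : (L ⊗[ℝ] L) →ₗ[ℝ] (L ⊗[ℝ] L) :=
  LinearMap.rTensor L (LieAlgebra.ad ℝ L X) + LinearMap.lTensor L (LieAlgebra.ad ℝ L X)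

/-- S∧S: the span of wedges, i.e. the skew-symmetric part of S⊗S. -/
def skewPart : Submodule ℝ (L ⊗[ℝ] L) :=
  Submodule.span ℝ {w | ∃ X Y : L, w = wedge L X Y}

/-- 1-cocycle condition. -/
def IsCocycle (δ : L → L ⊗[ℝ] L) : Prop :=
  ∀ X Y : L, δ ⁅X, Y⁆ = act L X (δ Y) - act L Y (δ X)

/-- The coboundary cocommutator δ_r(X) = X·r, as a linear map. -/
def cobdry (r : L ⊗[ℝ] L) : L →ₗ[ℝ] L ⊗[ℝ] L where
  toFun X := act L X r
  map_add' X Y := by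
    have h : LieAlgebra.ad ℝ L (X + Y) = LieAlgebra.ad ℝ L X + LieAlgebra.ad ℝ L Y :=
      map_add _ _ _
    simp only [act, h, LinearMap.rTensor_add, LinearMap.lTensor_add, LinearMap.add_apply]
    abel
  map_smul' c X := by
    have h : LieAlgebra.ad ℝ L (c • X) = c • LieAlgebra.ad ℝ L X := map_smul _ _ _
    simp only [act, h, LinearMap.rTensor_smul, LinearMap.lTensor_smul, LinearMap.add_apply,
      LinearMap.smul_apply, RingHom.id_apply, smul_add]

/-- The cyclic permutation ζ : x⊗y⊗z ↦ z⊗x⊗y on (S⊗S)⊗S. -/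
def zeta : ((L ⊗[ℝ] L) ⊗[ℝ] L) →ₗ[ℝ] ((L ⊗[ℝ] L) ⊗[ℝ] L) :=
  ((TensorProduct.assoc ℝ L L L).symm.toLinearMap).comp
    ((TensorProduct.comm ℝ (L ⊗[ℝ] L) L).toLinearMap)

/-- The co-Jacobi identity for a linear map δ : S → S⊗S. -/
def CoJacobi (δ : L →ₗ[ℝ] L ⊗[ℝ] L) : Prop :=
  ∀ X : L,
    ((LinearMap.id : ((L ⊗[ℝ] L) ⊗[ℝ] L) →ₗ[ℝ] ((L ⊗[ℝ] L) ⊗[ℝ] L)) + zeta L +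
      zeta L ∘ₗ zeta L) (LinearMap.rTensor L δ (δ X)) = 0

/-- A Lie bialgebra cocommutator: skew-symmetric-valued 1-cocycle satisfying co-Jacobi. -/
def IsBialgCocomm (δ : L →ₗ[ℝ] L ⊗[ℝ] L) : Prop :=
  (∀ X : L, δ X ∈ skewPart L) ∧ IsCocycle L ⇑δ ∧ CoJacobi L δ

/-- The general 15-parameter skew-symmetric element r(a,b,c) of S⊗S. -/
def rGen (D H P K C M : L) (a1 a2 a3 a4 a5 a6 b1 b2 b3 b4 b5 b6 c1 c2 c3 : ℝ) :
    L ⊗[ℝ] L :=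
  a1 • wedge L D P + a2 • wedge L D H + a3 • wedge L P M + a4 • wedge L H M +
    a5 • wedge L P H + a6 • wedge L P C + b1 • wedge L D K + b2 • wedge L D C +
    b3 • wedge L K M + b4 • wedge L C M + b5 • wedge L K C + b6 • wedge L K H +
    c1 • wedge L D M + c2 • wedge L P K + c3 • wedge L H C

/-- The 19 Schrödinger bialgebra equations. -/
def Eqs19 (a1 a2 a3 a4 a5 a6 b1 b2 b3 b4 b5 b6 c1 c2 c3 : ℝ) : Prop :=
  a6^2 + a6*b1 - 3*a1*b5 + b5*b6 = 0 ∧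
  a2*a3 - 2*a1*a4 - a4*b6 - 3*a5*c1 + a5*c2 = 0 ∧
  a1*a2 + a2*b6 - a5*c3 = 0 ∧
  a5*b1 - a1*b6 - 2*a2*c1 - a4*c3 = 0 ∧
  a4*a6 + a4*b1 - a2*b3 - a5*b4 + a1*c1 - a1*c2 = 0 ∧
  3*a1*b2 - a2*b5 + a6*c3 + b1*c3 = 0 ∧
  a3*b2 + 2*a1*b4 - a4*b5 + a6*c1 + a6*c2 + b3*c3 = 0 ∧
  3*a2*b5 + b2*b6 - a6*c3 = 0 ∧
  b6^2 + b6*a1 - 3*b1*a5 + a5*a6 = 0 ∧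
  b2*b3 - 2*b1*b4 - b4*a6 - 3*b5*c1 - b5*c2 = 0 ∧
  b1*b2 + b2*a6 + b5*c3 = 0 ∧
  b5*a1 - b1*a6 - 2*b2*c1 + b4*c3 = 0 ∧
  b4*b6 + b4*a1 - b2*a3 - b5*a4 + b1*c1 + b1*c2 = 0 ∧
  3*b1*a2 - b2*a5 - b6*c3 - a1*c3 = 0 ∧
  b3*a2 + 2*b1*a4 - b4*a5 + b6*c1 - b6*c2 - a3*c3 = 0 ∧
  3*b2*a5 + a2*a6 + b6*c3 = 0 ∧
  4*a2*b2 + c3^2 = 0 ∧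
  2*a4*b2 + 2*a2*b4 + a5*b5 - a6*b6 = 0 ∧
  2*a1*b1 - a1*a6 - b1*b6 + a5*b5 - a6*b6 = 0

/-- Full antisymmetrization X∧Y∧Z in (S⊗S)⊗S. -/
def wedge3 (X Y Z : L) : (L ⊗[ℝ] L) ⊗[ℝ] L :=
  (X ⊗ₜ[ℝ] Y) ⊗ₜ[ℝ] Z - (X ⊗ₜ[ℝ] Z) ⊗ₜ[ℝ] Y - (Y ⊗ₜ[ℝ] X) ⊗ₜ[ℝ] Z +
    (Y ⊗ₜ[ℝ] Z) ⊗ₜ[ℝ] X + (Z ⊗ₜ[ℝ] X) ⊗ₜ[ℝ] Y - (Z ⊗ₜ[ℝ] Y) ⊗ₜ[ℝ] X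

/-- The Schouten bracket [[r,r]], written in coordinates w.r.t. a basis. -/
def schouten (B : Module.Basis (Fin 6) ℝ L) (r : L ⊗[ℝ] L) : (L ⊗[ℝ] L) ⊗[ℝ] L :=
  ∑ i : Fin 6, ∑ j : Fin 6, ∑ k : Fin 6, ∑ l : Fin 6,
    (((B.tensorProduct B).repr r (i, j)) * ((B.tensorProduct B).repr r (k, l))) •
      ((⁅B i, B k⁆ ⊗ₜ[ℝ] B j) ⊗ₜ[ℝ] B l + (B i ⊗ₜ[ℝ] ⁅B j, B k⁆) ⊗ₜ[ℝ] B l +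
        (B i ⊗ₜ[ℝ] B k) ⊗ₜ[ℝ] ⁅B j, B l⁆)

/-- The adjoint-invariant elements of S⊗S. -/
def invariants : Submodule ℝ (L ⊗[ℝ] L) where
  carrier := {η | ∀ X : L, act L X η = 0}
  add_mem' := by
    intro a b ha hb X
    simp [map_add, ha X, hb X]
  zero_mem' := by intro X; simp
  smul_mem' := by
    intro c a ha X
    simp [map_smul, ha X]

/-- The space of skew-symmetric-valued 1-cocycles on S. -/
def cocycleSpace : Submodule ℝ (L →ₗ[ℝ] (L ⊗[ℝ] L)) where
  carrier := {δ | (∀ X : L, δ X ∈ skewPart L) ∧ IsCocycle L ⇑δ}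
  add_mem' := by
    rintro a b ⟨ha1, ha2⟩ ⟨hb1, hb2⟩
    refine ⟨fun X => add_mem (ha1 X) (hb1 X), fun X Y => ?_⟩
    simp only [LinearMap.add_apply, ha2 X Y, hb2 X Y, map_add]
    abel
  zero_mem' := by
    refine ⟨fun X => zero_mem _, fun X Y => ?_⟩
    simp
  smul_mem' := by
    rintro c a ⟨ha1, ha2⟩
    refine ⟨fun X => Submodule.smul_mem _ c (ha1 X), fun X Y => ?_⟩
    simp only [LinearMap.smul_apply, ha2 X Y, map_smul, smul_sub]

end

/-! `X·` acts on `L ⊗ L` as a derivation, so `X·(Y∧Z) = [X,Y]∧Z + Y∧[X,Z]`; expanding `r` by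
linearity and inserting the Schrödinger structure constants gives each `δ_r(X)`. -/

section Action

variable {L : Type} [LieRing L] [LieAlgebra ℝ L]

lemma act_tmul (X Y Z : L) : act L X (Y ⊗ₜ[ℝ] Z) = ⁅X, Y⁆ ⊗ₜ[ℝ] Z + Y ⊗ₜ[ℝ] ⁅X, Z⁆ := by
  simp [act, LieAlgebra.ad_apply]

lemma act_wedge (X Y Z : L) :
    act L X (wedge L Y Z) = wedge L ⁅X, Y⁆ Z + wedge L Y ⁅X, Z⁆ := by
  simp only [wedge, map_sub, act_tmul]
  abel

lemma cobdry_apply (r : L ⊗[ℝ] L) (X : L) : cobdry L r X = act L X r := rfl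

end Action

structure IsSchrodingerBasis {L : Type} [LieRing L] [LieAlgebra ℝ L] (D H P K C M : L) :
    Prop where
  lie_D_P : ⁅D, P⁆ = -P
  lie_D_K : ⁅D, K⁆ = K
  lie_K_P : ⁅K, P⁆ = M
  lie_D_H : ⁅D, H⁆ = (-2 : ℝ) • H
  lie_D_C : ⁅D, C⁆ = (2 : ℝ) • C
  lie_H_C : ⁅H, C⁆ = D
  lie_K_H : ⁅K, H⁆ = P
  lie_P_C : ⁅P, C⁆ = -K
  lie_K_C : ⁅K, C⁆ = 0
  lie_P_H : ⁅P, H⁆ = 0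
  lie_M_left : ∀ X : L, ⁅M, X⁆ = 0

namespace IsSchrodingerBasis

variable {L : Type} [LieRing L] [LieAlgebra ℝ L] {D H P K C M : L}

lemma lie_P_D (h : IsSchrodingerBasis D H P K C M) : ⁅P, D⁆ = P := by
  rw [← lie_skew, h.lie_D_P, neg_neg]

lemma lie_K_D (h : IsSchrodingerBasis D H P K C M) : ⁅K, D⁆ = -K := by
  rw [← lie_skew, h.lie_D_K]

lemma lie_P_K (h : IsSchrodingerBasis D H P K C M) : ⁅P, K⁆ = -M := by
  rw [← lie_skew, h.lie_K_P]

lemma lie_H_D (h : IsSchrodingerBasis D H P K C M) : ⁅H, D⁆ = (2 : ℝ) • H := by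
  rw [← lie_skew, h.lie_D_H, neg_smul, neg_neg]

lemma lie_C_D (h : IsSchrodingerBasis D H P K C M) : ⁅C, D⁆ = (-2 : ℝ) • C := by
  rw [← lie_skew, h.lie_D_C, neg_smul]

lemma lie_C_H (h : IsSchrodingerBasis D H P K C M) : ⁅C, H⁆ = -D := by
  rw [← lie_skew, h.lie_H_C]

lemma lie_H_K (h : IsSchrodingerBasis D H P K C M) : ⁅H, K⁆ = -P := by
  rw [← lie_skew, h.lie_K_H]

lemma lie_C_P (h : IsSchrodingerBasis D H P K C M) : ⁅C, P⁆ = K := by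
  rw [← lie_skew, h.lie_P_C, neg_neg]

lemma lie_C_K (h : IsSchrodingerBasis D H P K C M) : ⁅C, K⁆ = 0 := by
  rw [← lie_skew, h.lie_K_C, neg_zero]

lemma lie_H_P (h : IsSchrodingerBasis D H P K C M) : ⁅H, P⁆ = 0 := by
  rw [← lie_skew, h.lie_P_H, neg_zero]

lemma lie_M_right (h : IsSchrodingerBasis D H P K C M) (X : L) : ⁅X, M⁆ = 0 := by
  rw [← lie_skew, h.lie_M_left, neg_zero]

end IsSchrodingerBasis

theorem statement7_general (L : Type) [LieRing L] [LieAlgebra ℝ L]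
    (D H P K C M : L)
    (hDP : ⁅D, P⁆ = -P) (hDK : ⁅D, K⁆ = K) (hKP : ⁅K, P⁆ = M)
    (hDH : ⁅D, H⁆ = (-2 : ℝ) • H) (hDC : ⁅D, C⁆ = (2 : ℝ) • C) (hHC : ⁅H, C⁆ = D)
    (hKH : ⁅K, H⁆ = P) (hPC : ⁅P, C⁆ = -K) (hKC : ⁅K, C⁆ = 0) (hPH : ⁅P, H⁆ = 0)
    (hM : ∀ X : L, ⁅M, X⁆ = 0)
    (a1 a2 a3 a4 a5 a6 b1 b2 b3 b4 b5 b6 c1 c2 c3 : ℝ) (r : L ⊗[ℝ] L) (hr : r = rGen L D H P K C M a1 a2 a3 a4 a5 a6 b1 b2 b3 b4 b5 b6 c1 c2 c3) :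
    cobdry L r D = -(a1 • wedge L D P) - (2*a2) • wedge L D H - a3 • wedge L P M -
        (2*a4) • wedge L H M - (3*a5) • wedge L P H + a6 • wedge L P C + b1 • wedge L D K +
        (2*b2) • wedge L D C + b3 • wedge L K M + (2*b4) • wedge L C M + (3*b5) • wedge L K C -
        b6 • wedge L K H ∧
    cobdry L r P = (a6 - b1) • wedge L K P - a2 • wedge L H P - b1 • wedge L D M -
        b2 • (wedge L C P + wedge L D K) - b4 • wedge L K M + b5 • wedge L C M +
        b6 • wedge L H M + (c1 - c2) • wedge L P M + c3 • wedge L K H ∧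
    cobdry L r K = (a1 - b6) • wedge L P K + b2 • wedge L C K + a1 • wedge L D M +
        a2 • (wedge L H K + wedge L D P) + a4 • wedge L P M - a5 • wedge L H M -
        a6 • wedge L C M - (c1 + c2) • wedge L K M + c3 • wedge L P C ∧
    cobdry L r H = -((2*a1 + b6) • wedge L P H) - (a6 + b1) • wedge L D P -
        (2*b1) • wedge L K H - (2*b2) • wedge L C H - b3 • wedge L P M + b4 • wedge L D M -
        b5 • (wedge L D K + wedge L P C) + (2*c1) • wedge L H M - c3 • wedge L D H ∧
    cobdry L r C = (2*b1 + a6) • wedge L K C + (b6 + a1) • wedge L D K +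
        (2*a1) • wedge L P C + (2*a2) • wedge L H C + a3 • wedge L K M - a4 • wedge L D M +
        a5 • (wedge L D P + wedge L K H) - (2*c1) • wedge L C M - c3 • wedge L D C ∧
    cobdry L r M = 0 := by
  have h : IsSchrodingerBasis D H P K C M :=
    ⟨hDP, hDK, hKP, hDH, hDC, hHC, hKH, hPC, hKC, hPH, hM⟩
  subst hr
  refine ⟨?_, ?_, ?_, ?_, ?_, ?_⟩ <;>
  · simp only [cobdry_apply, rGen, map_add, map_smul, act_wedge]
    simp only [lie_self, h.lie_D_P, h.lie_D_K, h.lie_K_P, h.lie_D_H, h.lie_D_C, h.lie_H_C,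
      h.lie_K_H, h.lie_P_C, h.lie_K_C, h.lie_P_H, h.lie_M_left, h.lie_P_D, h.lie_K_D, h.lie_P_K,
      h.lie_H_D, h.lie_C_D, h.lie_C_H, h.lie_H_K, h.lie_C_P, h.lie_C_K, h.lie_H_P, h.lie_M_right]
    simp only [wedge, ← smul_tmul', tmul_smul, neg_tmul, tmul_neg, tmul_zero, zero_tmul]
    module

theorem statement7 (L : Type) [LieRing L] [LieAlgebra ℝ L]
    (D H P K C M : L) (B : Module.Basis (Fin 6) ℝ L)
    (hB : ⇑B = ![D, H, P, K, C, M])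
    (hDP : ⁅D, P⁆ = -P) (hDK : ⁅D, K⁆ = K) (hKP : ⁅K, P⁆ = M)
    (hDH : ⁅D, H⁆ = (-2 : ℝ) • H) (hDC : ⁅D, C⁆ = (2 : ℝ) • C) (hHC : ⁅H, C⁆ = D)
    (hKH : ⁅K, H⁆ = P) (hPC : ⁅P, C⁆ = -K) (hKC : ⁅K, C⁆ = 0) (hPH : ⁅P, H⁆ = 0)
    (hM : ∀ X : L, ⁅M, X⁆ = 0)
    (a1 a2 a3 a4 a5 a6 b1 b2 b3 b4 b5 b6 c1 c2 c3 : ℝ) (r : L ⊗[ℝ] L) (hr : r = rGen L D H P K C M a1 a2 a3 a4 a5 a6 b1 b2 b3 b4 b5 b6 c1 c2 c3) :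
    cobdry L r D = -(a1 • wedge L D P) - (2*a2) • wedge L D H - a3 • wedge L P M -
        (2*a4) • wedge L H M - (3*a5) • wedge L P H + a6 • wedge L P C + b1 • wedge L D K +
        (2*b2) • wedge L D C + b3 • wedge L K M + (2*b4) • wedge L C M + (3*b5) • wedge L K C -
        b6 • wedge L K H ∧
    cobdry L r P = (a6 - b1) • wedge L K P - a2 • wedge L H P - b1 • wedge L D M -
        b2 • (wedge L C P + wedge L D K) - b4 • wedge L K M + b5 • wedge L C M +
        b6 • wedge L H M + (c1 - c2) • wedge L P M + c3 • wedge L K H ∧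
    cobdry L r K = (a1 - b6) • wedge L P K + b2 • wedge L C K + a1 • wedge L D M +
        a2 • (wedge L H K + wedge L D P) + a4 • wedge L P M - a5 • wedge L H M -
        a6 • wedge L C M - (c1 + c2) • wedge L K M + c3 • wedge L P C ∧
    cobdry L r H = -((2*a1 + b6) • wedge L P H) - (a6 + b1) • wedge L D P -
        (2*b1) • wedge L K H - (2*b2) • wedge L C H - b3 • wedge L P M + b4 • wedge L D M -
        b5 • (wedge L D K + wedge L P C) + (2*c1) • wedge L H M - c3 • wedge L D H ∧
    cobdry L r C = (2*b1 + a6) • wedge L K C + (b6 + a1) • wedge L D K +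
        (2*a1) • wedge L P C + (2*a2) • wedge L H C + a3 • wedge L K M - a4 • wedge L D M +
        a5 • (wedge L D P + wedge L K H) - (2*c1) • wedge L C M - c3 • wedge L D C ∧
    cobdry L r M = 0 :=
  statement7_general L D H P K C M hDP hDK hKP hDH hDC hHC hKH hPC hKC hPH hM a1 a2 a3 a4 a5 a6 b1
    b2 b3 b4 b5 b6 c1 c2 c3 r hr
end

section
/- The linear map φ: h6 → S determined by φ(N) = -D - (1/2)M, φ(A+) = P, φ(A-) = K, φ(B+) = 2H, φ(B-) = 2C, φ(M') = M is an isomorphism of Lie algebras between the two-photon algebra h6 and the centrally extended Schrödinger algebra S. -/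
open TensorProduct

/-! The map is checked to respect the bracket on pairs of basis vectors of h6; bijectivity follows
because its image contains the basis D, H, P, K, C, M of S, and both algebras are 6-dimensional. -/

theorem LinearMap.map_lie_of_basis {R ι L L' : Type*} [CommRing R] [LinearOrder ι]
    [LieRing L] [LieAlgebra R L] [LieRing L'] [LieAlgebra R L'] (b : Module.Basis ι R L)
    (f : L →ₗ[R] L') (h : ∀ i j, i < j → f ⁅b i, b j⁆ = ⁅f (b i), f (b j)⁆) (x y : L) :
    f ⁅x, y⁆ = ⁅f x, f y⁆ := by
  have hbasis : ∀ i j, f ⁅b i, b j⁆ = ⁅f (b i), f (b j)⁆ := by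
    intro i j
    rcases lt_trichotomy i j with hij | rfl | hji
    · exact h i j hij
    · simp only [lie_self, map_zero]
    · rw [← lie_skew, map_neg, h j i hji, lie_skew]
  have hbilin : (LieModule.toEnd R L L : L →ₗ[R] Module.End R L).compr₂ f =
      ((LieModule.toEnd R L' L' : L' →ₗ[R] Module.End R L') ∘ₗ f).compl₂ f :=
    b.ext fun i => b.ext fun j => hbasis i j
  exact LinearMap.congr_fun (LinearMap.congr_fun hbilin x) y

theorem LinearMap.bijective_of_basis_mem_range {K V W ι : Type*} [Field K] [AddCommGroup V]
    [Module K V] [AddCommGroup W] [Module K W] [Fintype ι] (b : Module.Basis ι K V)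
    (b' : Module.Basis ι K W) (f : W →ₗ[K] V) (h : ∀ i, b i ∈ LinearMap.range f) :
    Function.Bijective f := by
  have := b.finiteDimensional_of_finite
  have := b'.finiteDimensional_of_finite
  have hsurj : Function.Surjective f := by
    rw [← LinearMap.range_eq_top, eq_top_iff, ← b.span_eq, Submodule.span_le]
    rintro _ ⟨i, rfl⟩
    exact h i
  have hdim : Module.finrank K W = Module.finrank K V := by
    rw [Module.finrank_eq_card_basis b, Module.finrank_eq_card_basis b']
  exact ⟨(LinearMap.injective_iff_surjective_of_finrank_eq_finrank hdim).2 hsurj, hsurj⟩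

theorem statement17 (L : Type) [LieRing L] [LieAlgebra ℝ L]
    (D H P K C M : L) (B : Module.Basis (Fin 6) ℝ L)
    (hB : ⇑B = ![D, H, P, K, C, M])
    (hDP : ⁅D, P⁆ = -P) (hDK : ⁅D, K⁆ = K) (hKP : ⁅K, P⁆ = M)
    (hDH : ⁅D, H⁆ = (-2 : ℝ) • H) (hDC : ⁅D, C⁆ = (2 : ℝ) • C) (hHC : ⁅H, C⁆ = D)
    (hKH : ⁅K, H⁆ = P) (hPC : ⁅P, C⁆ = -K) (hKC : ⁅K, C⁆ = 0) (hPH : ⁅P, H⁆ = 0)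
    (hM : ∀ X : L, ⁅M, X⁆ = 0)
    (L2 : Type) [LieRing L2] [LieAlgebra ℝ L2]
    (N Ap Am Bp Bm M' : L2) (B2 : Module.Basis (Fin 6) ℝ L2)
    (hB2 : ⇑B2 = ![N, Ap, Am, Bp, Bm, M'])
    (g1 : ⁅N, Ap⁆ = Ap) (g2 : ⁅N, Am⁆ = -Am) (g3 : ⁅Am, Ap⁆ = M')
    (g4 : ⁅N, Bp⁆ = (2:ℝ) • Bp) (g5 : ⁅N, Bm⁆ = (-2:ℝ) • Bm)
    (g6 : ⁅Bm, Bp⁆ = (4:ℝ) • N + (2:ℝ) • M')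
    (g7 : ⁅Ap, Bm⁆ = (-2:ℝ) • Am) (g8 : ⁅Am, Bp⁆ = (2:ℝ) • Ap)
    (g9 : ⁅Ap, Bp⁆ = 0) (g10 : ⁅Am, Bm⁆ = 0) (g11 : ∀ X : L2, ⁅M', X⁆ = 0)
    (phi : L2 →ₗ[ℝ] L)
    (hN : phi N = -D - (1/2 : ℝ) • M) (hAp : phi Ap = P) (hAm : phi Am = K)
    (hBp : phi Bp = (2:ℝ) • H) (hBm : phi Bm = (2:ℝ) • C) (hM' : phi M' = M) :
    (∀ x y : L2, phi ⁅x, y⁆ = ⁅phi x, phi y⁆) ∧ Function.Bijective phi := by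
  have hApAm : ⁅Ap, Am⁆ = -M' := by rw [← lie_skew, g3]
  have hBpBm : ⁅Bp, Bm⁆ = -((4:ℝ) • N + (2:ℝ) • M') := by rw [← lie_skew, g6]
  have hM'_right : ∀ X : L2, ⁅X, M'⁆ = 0 := fun X => by rw [← lie_skew, g11, neg_zero]
  have hPK : ⁅P, K⁆ = -M := by rw [← lie_skew, hKP]
  have hM_right : ∀ X : L, ⁅X, M⁆ = 0 := fun X => by rw [← lie_skew, hM, neg_zero]
  refine ⟨phi.map_lie_of_basis B2 fun i j hij => ?_,
    phi.bijective_of_basis_mem_range B B2 fun i => ?_⟩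
  · fin_cases i <;> fin_cases j <;> simp at hij
    all_goals
      simp [hB2, g1, g2, hApAm, g4, g5, hBpBm, g7, g8, g9, g10, hM'_right, hN, hAp, hAm, hBp,
          hBm, hM', hDP, hDK, hPK, hDH, hDC, hHC, hKH, hPC, hKC, hPH, hM, hM_right] <;>
        module
  · rw [hB]
    fin_cases i
    exacts [⟨-N - (1/2 : ℝ) • M', by simp [hN, hM']⟩, ⟨(1/2 : ℝ) • Bp, by simp [hBp]⟩,
      ⟨Ap, hAp⟩, ⟨Am, hAm⟩, ⟨(1/2 : ℝ) • Bm, by simp [hBm]⟩, ⟨M', hM'⟩]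
end
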